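/- Suppose all four entries of p are strictly positive. Then for all graphs g_c, g_b on [n] and all permutations π, π' of [n], P[Π = π and (G_c, G_b) = (g_c, g_b)] · (p01·p10/(p00·p11))^{Δ(g_c∘l(π'), g_b)/2} = P[Π = π' and (G_c, G_b) = (g_c, g_b)] · (p01·p10/(p00·p11))^{Δ(g_c∘l(π), g_b)/2}; that is, the posterior probability of a permutation π given (G_c, G_b) = (g_c, g_b) is proportional to (p01·p10/(p00·p11))^{Δ(g_c∘l(π), g_b)/2}. -/

import Mathlib

open Finset

/-- Unordered pairs of distinct vertices of `[n]`. -/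
abbrev VPairs (n : ℕ) := {e : Sym2 (Fin n) // ¬ e.IsDiag}

/-- A graph on `[n]`, identified with its edge-indicator function. -/
abbrev FGraph (n : ℕ) := VPairs n → Bool

/-- The permutation of vertex pairs induced by a permutation of vertices. -/
def pairPerm {n : ℕ} (π : Equiv.Perm (Fin n)) : Equiv.Perm (VPairs n) where
  toFun e := ⟨e.val.map π, fun h => e.prop ((Sym2.isDiag_map π.injective).mp h)⟩
  invFun e := ⟨e.val.map π.symm, fun h => e.prop ((Sym2.isDiag_map π.symm.injective).mp h)⟩
  left_inv e := by
    ext1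
    simp [Sym2.map_map]
  right_inv e := by
    ext1
    simp [Sym2.map_map]

/-- Hamming distance between two labelings. -/
def hamming {S : Type*} [Fintype S] [DecidableEq S] (f g : S → Bool) : ℕ :=
  (Finset.univ.filter fun e => f e ≠ g e).card

/-- `δ(τ; f, g) = (Δ(f∘τ, g) − Δ(f, g))/2`, as a rational number. -/
def deltaQ {S : Type*} [Fintype S] [DecidableEq S] (τ : Equiv.Perm S) (f g : S → Bool) : ℚ :=
  (((hamming (f ∘ τ) g : ℚ)) - (hamming f g : ℚ)) / 2

/-- The entry `(i,j)` of the type `μ(f,g)`. -/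
def typeCount {S : Type*} [Fintype S] [DecidableEq S] (f g : S → Bool) (i j : Bool) : ℕ :=
  (Finset.univ.filter fun e => f e = i ∧ g e = j).card

/-- The joint edge distribution determined by a probability vector. -/
def pv (p11 p10 p01 p00 : ℝ) : Bool → Bool → ℝ :=
  fun a b => if a then (if b then p11 else p10) else (if b then p01 else p00)

open Classical in
/-- The probability of an event under the correlated Erdős–Rényi model `ER(n,p)`. -/
noncomputable def ERprob (n : ℕ) (p : Bool → Bool → ℝ)
    (E : FGraph n × FGraph n → Prop) : ℝ :=
  ∑ gab : FGraph n × FGraph n,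
    (if E gab then (1 : ℝ) else 0) * ∏ e : VPairs n, p (gab.1 e) (gab.2 e)

open Classical in
/-- The probability of an event under the joint distribution of a uniformly random
permutation `Π` of `[n]` together with `(G_a, G_b) ~ ER(n,p)` independent of it. -/
noncomputable def ERPermProb (n : ℕ) (p : Bool → Bool → ℝ)
    (E : Equiv.Perm (Fin n) → FGraph n × FGraph n → Prop) : ℝ :=
  (∑ π : Equiv.Perm (Fin n), ∑ gab : FGraph n × FGraph n,
    (if E π gab then (1 : ℝ) else 0) * ∏ e : VPairs n, p (gab.1 e) (gab.2 e))
    / (Nat.factorial n)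

/-- The anonymized graph `G_c`, determined by `G_c(l(Π)(e)) = G_a(e)`. -/
def anonymize {n : ℕ} (π : Equiv.Perm (Fin n)) (ga : FGraph n) : FGraph n :=
  fun e => ga ((pairPerm π).symm e)

/-- `S_{n,nt}`: the permutations of `[n]` with exactly `nt` non-fixed points. -/
def Snn (n nt : ℕ) : Finset (Equiv.Perm (Fin n)) :=
  Finset.univ.filter fun π => (Finset.univ.filter fun x => π x ≠ x).card = nt

open Classical in
/-- The generating function `A_{S,τ}(w,z)`; here `z^δ` is expressed as `√z^(2δ)`. -/
noncomputable def AgF {S : Type*} [Fintype S] (τ : Equiv.Perm S)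
    (w : Bool → Bool → ℝ) (z : ℝ) : ℝ :=
  ∑ g : S → Bool, ∑ h : S → Bool,
    (Real.sqrt z) ^ ((hamming (g ∘ τ) h : ℤ) - (hamming g h : ℤ)) *
      ∏ i : Bool, ∏ j : Bool, w i j ^ typeCount g h i j

/-- `a_ℓ(w,z)`: the generating function of a single cycle of length `ℓ`. -/
noncomputable def aGF (ℓ : ℕ) (w : Bool → Bool → ℝ) (z : ℝ) : ℝ :=
  AgF (finRotate ℓ) w z

open Classical in
/-- The number of cycles of length `ℓ` in the cycle decomposition of `τ`
(the number of points whose `τ`-orbit has size `ℓ`, divided by `ℓ`). -/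
noncomputable def cycleCount {S : Type*} [Fintype S] (τ : Equiv.Perm S) (ℓ : ℕ) : ℕ :=
  (Finset.univ.filter fun x : S =>
    (Finset.univ.filter fun y : S => τ.SameCycle x y).card = ℓ).card / ℓ

open Classical in
/-- The probability of an event under an Erdős–Rényi graph `G(n,p)`. -/
noncomputable def ERgraphProb (n : ℕ) (p : ℝ) (E : FGraph n → Prop) : ℝ :=
  ∑ g : FGraph n,
    (if E g then (1 : ℝ) else 0) * ∏ e : VPairs n, (if g e then p else 1 - p)

open Classical in
/-- The number of automorphisms of a graph. -/
noncomputable def autCard {n : ℕ} (g : FGraph n) : ℕ :=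
  (Finset.univ.filter fun π : Equiv.Perm (Fin n) =>
    ∀ e : VPairs n, g (pairPerm π e) = g e).card

/-!
Write `ρ = √(p01·p10/(p00·p11))`. Each edge weight factors as `p(x, y) = α(x) β(y) ρ^[x ≠ y]`,
so the likelihood of `(g_c, g_b)` under the hypothesis `Π = π` is
`(∏ₑ α(g_c(l(π) e))) (∏ₑ β(g_b e)) ρ^Δ(g_c∘l(π), g_b)`. The first product does not depend on `π`,
since `l(π)` only permutes the vertex pairs; hence the posterior of `π` is proportional to
`ρ^Δ(g_c∘l(π), g_b)`.
-/

lemma prod_eq_mul_mul_pow_hamming {S M : Type*} [Fintype S] [DecidableEq S] [CommMonoid M]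
    {p : Bool → Bool → M} {α β : Bool → M} {ρ : M}
    (hp : ∀ x y, p x y = α x * β y * ρ ^ (if x ≠ y then 1 else 0)) (f g : S → Bool) :
    ∏ e, p (f e) (g e) = (∏ e, α (f e)) * (∏ e, β (g e)) * ρ ^ hamming f g := by
  simp only [hp, prod_mul_distrib, prod_pow_eq_pow_sum, hamming, card_filter]

lemma exists_pv_eq_mul_mul_pow {p11 p10 p01 p00 ρ : ℝ}
    (h10 : p10 ≠ 0) (h00 : p00 ≠ 0) (hρ : ρ ≠ 0) (hρ_sq : ρ ^ 2 * (p00 * p11) = p01 * p10) :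
    ∃ α β : Bool → ℝ, ∀ x y,
      pv p11 p10 p01 p00 x y = α x * β y * ρ ^ (if x ≠ y then 1 else 0) := by
  refine ⟨fun x => if x then p10 / (p00 * ρ) else 1,
    fun y => if y then p11 * p00 * ρ / p10 else p00, ?_⟩
  rintro (_ | _) (_ | _) <;> simp [pv] <;> field_simp
  linear_combination (-1) * hρ_sq

lemma anonymize_eq_iff {n : ℕ} {π : Equiv.Perm (Fin n)} {ga gc : FGraph n} :
    anonymize π ga = gc ↔ ga = fun e => gc (pairPerm π e) := by
  simp only [anonymize, funext_iff]
  exact ⟨fun h e => by simpa using h (pairPerm π e), fun h e => by simp [h]⟩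

lemma ERPermProb_eq_and_anonymize_eq {n : ℕ} (p : Bool → Bool → ℝ) (gc gb : FGraph n)
    (π : Equiv.Perm (Fin n)) :
    ERPermProb n p (fun σ gab => σ = π ∧ anonymize σ gab.1 = gc ∧ gab.2 = gb)
      = (∏ e, p (gc (pairPerm π e)) (gb e)) / n.factorial := by
  classical
  have hevent : ∀ σ (gab : FGraph n × FGraph n),
      (σ = π ∧ anonymize σ gab.1 = gc ∧ gab.2 = gb) ↔
        (σ = π ∧ gab = (fun e => gc (pairPerm π e), gb)) := by
    rintro σ ⟨ga, gb'⟩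
    exact and_congr_right fun hσ => by simp [hσ, anonymize_eq_iff]
  unfold ERPermProb
  simp [hevent, ite_and]

theorem posterior_propto_general
    (n : ℕ) (p11 p10 p01 p00 : ℝ)
    (hpos : 0 < p11 ∧ 0 < p10 ∧ 0 < p01 ∧ 0 < p00)
    (gc gb : FGraph n) (π π' : Equiv.Perm (Fin n)) :
    ERPermProb n (pv p11 p10 p01 p00)
        (fun σ gab => σ = π ∧ anonymize σ gab.1 = gc ∧ gab.2 = gb) *
      Real.sqrt (p01 * p10 / (p00 * p11)) ^ hamming (fun e => gc (pairPerm π' e)) gb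
    = ERPermProb n (pv p11 p10 p01 p00)
        (fun σ gab => σ = π' ∧ anonymize σ gab.1 = gc ∧ gab.2 = gb) *
      Real.sqrt (p01 * p10 / (p00 * p11)) ^ hamming (fun e => gc (pairPerm π e)) gb := by
  obtain ⟨h11, h10, h01, h00⟩ := hpos
  set ρ := Real.sqrt (p01 * p10 / (p00 * p11))
  have hρ_sq : ρ ^ 2 * (p00 * p11) = p01 * p10 := by
    rw [Real.sq_sqrt (by positivity), div_mul_cancel₀ _ (by positivity)]
  obtain ⟨α, β, hfactor⟩ :=
    exists_pv_eq_mul_mul_pow h10.ne' h00.ne' (by positivity) hρ_sq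
  simp only [ERPermProb_eq_and_anonymize_eq, prod_eq_mul_mul_pow_hamming hfactor,
    Equiv.prod_comp (pairPerm _) fun e => α (gc e)]
  ring

/-- the posterior probability of `π` given `(G_c, G_b)` is proportional
to `(p01·p10/(p00·p11))^{Δ(g_c∘l(π), g_b)/2}`. -/
theorem posterior_propto
    (n : ℕ) (p11 p10 p01 p00 : ℝ)
    (hpos : 0 < p11 ∧ 0 < p10 ∧ 0 < p01 ∧ 0 < p00)
    (hsum : p11 + p10 + p01 + p00 = 1)
    (gc gb : FGraph n) (π π' : Equiv.Perm (Fin n)) :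
    ERPermProb n (pv p11 p10 p01 p00)
        (fun σ gab => σ = π ∧ anonymize σ gab.1 = gc ∧ gab.2 = gb) *
      Real.sqrt (p01 * p10 / (p00 * p11)) ^ hamming (fun e => gc (pairPerm π' e)) gb
    = ERPermProb n (pv p11 p10 p01 p00)
        (fun σ gab => σ = π' ∧ anonymize σ gab.1 = gc ∧ gab.2 = gb) *
      Real.sqrt (p01 * p10 / (p00 * p11)) ^ hamming (fun e => gc (pairPerm π e)) gb :=
  posterior_propto_general n p11 p10 p01 p00 hpos gc gb π π'
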